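/- Let t, ℓ, and j be positive integers, and suppose one of t or ℓ equals 2 and the other is even. Then Φ_t(j) ≤ (1/2)·ℓ·(t−1), i.e., 2·Φ_t(j) ≤ ℓ(t−1). -/

import Mathlib

/-!
For `t = 2` we have `Φ₂(j) = min(j, ℓ) + min(⌊j/2⌋, ℓ) − j`, and the bound is a case check.
For `ℓ = 2`, each summand satisfies `min(⌊j/b⌋, 2) ≤ 1 + [2b ≤ j]`, so the sum is at most
`t + ⌊j/2⌋ ≤ t + j − 1`.
-/

/-- For positive integers `ℓ, t, j`, `Φ_t(j) = (∑_{b=1}^t min(⌊j/b⌋, ℓ)) − j`. -/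
noncomputable def Phi (ℓ t j : ℤ) : ℤ := (∑ b ∈ Finset.Icc (1 : ℤ) t, min (j / b) ℓ) - j

open Finset

theorem two_mul_Phi_two_le (ℓ j : ℤ) : 2 * Phi ℓ 2 j ≤ ℓ := by
  have hIcc : Icc (1 : ℤ) 2 = {1, 2} := by decide
  rw [Phi, hIcc, sum_pair (by decide), Int.ediv_one]
  omega

theorem min_ediv_two_le (j : ℤ) {b : ℤ} (hb : 0 < b) :
    min (j / b) 2 ≤ 1 + if b ≤ j / 2 then 1 else 0 := by
  split_ifs with hbj
  · omega
  · have : j / b < 2 := Int.ediv_lt_of_lt_mul hb (by omega)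
    omega

theorem card_filter_Icc_one_le (t : ℤ) {m : ℤ} (hm : 0 ≤ m) :
    (#{b ∈ Icc 1 t | b ≤ m} : ℤ) ≤ m := by
  calc (#{b ∈ Icc 1 t | b ≤ m} : ℤ) ≤ #(Icc 1 m) := by
        gcongr
        intro b hb
        simp only [mem_filter, mem_Icc] at hb ⊢
        omega
    _ = m := by simp [hm]

theorem Phi_two_le {t j : ℤ} (ht : 0 ≤ t) (hj : 0 < j) : Phi 2 t j ≤ t - 1 := by
  have hsum : ∑ b ∈ Icc 1 t, min (j / b) 2 ≤ t + j / 2 :=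
    calc ∑ b ∈ Icc 1 t, min (j / b) 2
        ≤ ∑ b ∈ Icc 1 t, (1 + if b ≤ j / 2 then 1 else 0) :=
          sum_le_sum fun b hb => min_ediv_two_le j (by simp only [mem_Icc] at hb; omega)
      _ = t + #{b ∈ Icc 1 t | b ≤ j / 2} := by
          rw [sum_add_distrib, sum_const, sum_boole, Int.card_Icc]
          simp only [nsmul_eq_mul, mul_one]
          omega
      _ ≤ t + j / 2 := by grw [card_filter_Icc_one_le t (by omega : 0 ≤ j / 2)]
  rw [Phi]
  omega

theorem stmt1_general (t ℓ j : ℤ) (ht : 0 < t) (hj : 0 < j)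
    (h : (t = 2 ∧ Even ℓ) ∨ (ℓ = 2 ∧ Even t)) :
    2 * Phi ℓ t j ≤ ℓ * (t - 1) := by
  rcases h with ⟨rfl, -⟩ | ⟨rfl, -⟩
  · simpa using two_mul_Phi_two_le ℓ j
  · linarith [Phi_two_le ht.le hj]

theorem stmt1 (t ℓ j : ℤ) (ht : 0 < t) (hℓ : 0 < ℓ) (hj : 0 < j)
    (h : (t = 2 ∧ Even ℓ) ∨ (ℓ = 2 ∧ Even t)) :
    2 * Phi ℓ t j ≤ ℓ * (t - 1) :=
  stmt1_general t ℓ j ht hj h
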